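/- arXiv:1812.05993 — 4 statements merged into one kernel-verified Lean document; each statement's English description precedes it below -/
import Mathlib

section
/- Let E be the elliptic curve over the finite field 𝔽₇ given by the Weierstrass equation y² + y = x³ − x² − 2x + 1 (i.e., with coefficients a₁ = 0, a₂ = −1, a₃ = 1, a₄ = −2, a₆ = 1; this equation has nonzero discriminant over 𝔽₇). Then the group E(𝔽₇) of 𝔽₇-rational points of E (including the point at infinity) is isomorphic, as an abelian group, to (ℤ/3ℤ) × (ℤ/3ℤ). -/
/-!
Besides the point at infinity, `E(𝔽₇)` has exactly eight points, so it has order `9`.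
The points `P = (1, 2)` and `Q = (3, 2)` satisfy `2P = -P` and `2Q = -Q`, hence have order `3`,
and `P + Q = (4, 4)`, `P - Q = (5, 0)` together with negation `(x, y) ↦ (x, -y - 1)` reach every
affine point. So `(a, b) ↦ aP + bQ` maps `(ℤ/3ℤ)²` onto `E(𝔽₇)`, and a surjection between
groups of order `9` is an isomorphism.
-/

namespace WeierstrassCurve.Affine

lemma natCard_point_of_Δ_ne_zero {R : Type*} [CommRing R] [Finite R] {W : Affine R}
    (hΔ : W.Δ ≠ 0) : Nat.card W.Point = Nat.card {xy : R × R // W.Equation xy.1 xy.2} + 1 := by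
  rw [Nat.card_congr W.nonsingularPointEquiv, WithZero, Finite.card_option]
  exact congrArg (· + 1) <| Nat.card_congr <|
    Equiv.subtypeEquivRight fun _ ↦ (equation_iff_nonsingular_of_Δ_ne_zero hΔ).symm

variable {F : Type*} [Field F] [DecidableEq F] {W : Affine F}

lemma slope_eq_of_X_ne {x₁ x₂ y₁ y₂ ℓ : F} (hx : x₁ ≠ x₂) (hℓ : ℓ * (x₁ - x₂) = y₁ - y₂) :
    W.slope x₁ x₂ y₁ y₂ = ℓ := by
  rw [slope_of_X_ne hx, div_eq_iff (sub_ne_zero.mpr hx), hℓ]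

lemma slope_self_eq_of_Y_ne {x y ℓ : F} (hy : y ≠ W.negY x y)
    (hℓ : ℓ * (y - W.negY x y) = 3 * x ^ 2 + 2 * W.a₂ * x + W.a₄ - W.a₁ * y) :
    W.slope x x y y = ℓ := by
  rw [slope_of_Y_ne rfl hy, div_eq_iff (sub_ne_zero.mpr hy), hℓ]

lemma Point.some_add_some_eq_of_slope {x₁ x₂ x₃ y₁ y₂ y₃ ℓ : F} {h₁ : W.Nonsingular x₁ y₁}
    {h₂ : W.Nonsingular x₂ y₂} (h₃ : W.Nonsingular x₃ y₃) (hxy : ¬(x₁ = x₂ ∧ y₁ = W.negY x₂ y₂))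
    (hℓ : W.slope x₁ x₂ y₁ y₂ = ℓ) (hx₃ : W.addX x₁ x₂ ℓ = x₃) (hy₃ : W.addY x₁ x₂ y₁ ℓ = y₃) :
    some x₁ y₁ h₁ + some x₂ y₂ h₂ = some x₃ y₃ h₃ := by
  subst hℓ hx₃ hy₃
  exact Point.add_some hxy

end WeierstrassCurve.Affine

lemma three_zsmul_eq_zero_of_add_self_eq_neg {G : Type*} [AddGroup G] {P : G} (h : P + P = -P) :
    (3 : ℤ) • P = 0 := by
  rw [show (3 : ℤ) = 2 + 1 by norm_num, add_zsmul, two_zsmul, one_zsmul, h, neg_add_cancel]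

namespace ZMod

variable {G : Type*} [AddCommGroup G] {n : ℕ} {P Q : G} (hP : (n : ℤ) • P = 0)
  (hQ : (n : ℤ) • Q = 0)

def liftPair : ZMod n × ZMod n →+ G :=
  (lift n ⟨zmultiplesHom G P, hP⟩).coprod (lift n ⟨zmultiplesHom G Q, hQ⟩)

lemma liftPair_one_zero : liftPair hP hQ (1, 0) = P := by
  simp only [liftPair, AddMonoidHom.coprod_apply, map_zero, add_zero]
  rw [← Int.cast_one, lift_coe]
  exact one_zsmul P

lemma liftPair_zero_one : liftPair hP hQ (0, 1) = Q := by
  simp only [liftPair, AddMonoidHom.coprod_apply, map_zero, zero_add]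
  rw [← Int.cast_one, lift_coe]
  exact one_zsmul Q

lemma liftPair_surjective (h : AddSubgroup.closure {P, Q} = ⊤) :
    Function.Surjective (liftPair hP hQ) := by
  rw [← AddMonoidHom.range_eq_top, eq_top_iff, ← h, AddSubgroup.closure_le]
  rintro _ (rfl | rfl)
  · exact ⟨(1, 0), liftPair_one_zero hP hQ⟩
  · exact ⟨(0, 1), liftPair_zero_one hP hQ⟩

end ZMod

namespace Conductor701

open WeierstrassCurve.Affine

def W : WeierstrassCurve (ZMod 7) := { a₁ := 0, a₂ := -1, a₃ := 1, a₄ := -2, a₆ := 1 }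

lemma Δ_ne_zero : W.Δ ≠ 0 := by decide

def affinePoints : Finset (ZMod 7 × ZMod 7) :=
  {(1, 2), (1, 4), (3, 2), (3, 4), (4, 4), (4, 2), (5, 0), (5, 6)}

lemma equation_iff_mem {x y : ZMod 7} : W.toAffine.Equation x y ↔ (x, y) ∈ affinePoints := by
  rw [equation_iff]
  revert x y
  decide

lemma natCard_point : Nat.card W.toAffine.Point = 9 := by
  rw [natCard_point_of_Δ_ne_zero Δ_ne_zero,
    Nat.card_congr (Equiv.subtypeEquivRight fun _ ↦ equation_iff_mem), Nat.card_eq_fintype_card,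
    Fintype.card_coe]
  rfl

def pt (x y : ZMod 7) (h : (x, y) ∈ affinePoints := by decide) : W.toAffine.Point :=
  .some x y <| (equation_iff_nonsingular_of_Δ_ne_zero Δ_ne_zero).mp (equation_iff_mem.mpr h)

def P : W.toAffine.Point := pt 1 2
def Q : W.toAffine.Point := pt 3 2

lemma neg_P : -P = pt 1 4 := by decide
lemma neg_Q : -Q = pt 3 4 := by decide

instance fact_prime_seven : Fact (Nat.Prime 7) := ⟨by norm_num⟩

lemma P_add_P : P + P = -P := by
  rw [neg_P]
  exact Point.some_add_some_eq_of_slope _ (by decide)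
    (slope_self_eq_of_Y_ne (ℓ := 4) (by decide) (by decide)) (by decide) (by decide)

lemma Q_add_Q : Q + Q = -Q := by
  rw [neg_Q]
  exact Point.some_add_some_eq_of_slope _ (by decide)
    (slope_self_eq_of_Y_ne (ℓ := 1) (by decide) (by decide)) (by decide) (by decide)

lemma P_add_Q : P + Q = pt 4 4 :=
  Point.some_add_some_eq_of_slope _ (by decide)
    (slope_eq_of_X_ne (ℓ := 0) (by decide) (by decide)) (by decide) (by decide)

lemma P_sub_Q : P - Q = pt 5 0 := by
  rw [sub_eq_add_neg, neg_Q]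
  exact Point.some_add_some_eq_of_slope _ (by decide)
    (slope_eq_of_X_ne (ℓ := 1) (by decide) (by decide)) (by decide) (by decide)

lemma neg_pt_4_4 : -pt 4 4 = pt 4 2 := by decide
lemma neg_pt_5_0 : -pt 5 0 = pt 5 6 := by decide

lemma closure_P_Q_eq_top : AddSubgroup.closure {P, Q} = ⊤ := by
  set G := AddSubgroup.closure {P, Q}
  have hP : P ∈ G := AddSubgroup.subset_closure (.inl rfl)
  have hQ : Q ∈ G := AddSubgroup.subset_closure (.inr rfl)
  have hnP : pt 1 4 ∈ G := neg_P ▸ neg_mem hP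
  have hnQ : pt 3 4 ∈ G := neg_Q ▸ neg_mem hQ
  have hPQ : pt 4 4 ∈ G := P_add_Q ▸ add_mem hP hQ
  have hnPQ : pt 4 2 ∈ G := neg_pt_4_4 ▸ neg_mem hPQ
  have hP_Q : pt 5 0 ∈ G := P_sub_Q ▸ sub_mem hP hQ
  have hnP_Q : pt 5 6 ∈ G := neg_pt_5_0 ▸ neg_mem hP_Q
  refine eq_top_iff.mpr fun T _ ↦ ?_
  rcases T with _ | ⟨x, y, h⟩
  · exact zero_mem G
  have hxy := equation_iff_mem.mp h.1
  simp only [affinePoints, Finset.mem_insert, Finset.mem_singleton, Prod.mk.injEq] at hxy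
  rcases hxy with ⟨rfl, rfl⟩ | ⟨rfl, rfl⟩ | ⟨rfl, rfl⟩ | ⟨rfl, rfl⟩ | ⟨rfl, rfl⟩ | ⟨rfl, rfl⟩ |
    ⟨rfl, rfl⟩ | ⟨rfl, rfl⟩
  exacts [hP, hnP, hQ, hnQ, hPQ, hnPQ, hP_Q, hnP_Q]

end Conductor701

open Conductor701

/-- The elliptic curve `y² + y = x³ - x² - 2x + 1` over `𝔽₇` (the reduction modulo `7` of the
unique elliptic curve over `ℚ` of conductor `701`) has nonzero discriminant, and its group of
`𝔽₇`-rational points is isomorphic to `(ℤ/3ℤ) × (ℤ/3ℤ)`. -/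
theorem ogg_stmt1 [Fact (Nat.Prime 7)] :
    letI W : WeierstrassCurve (ZMod 7) :=
      { a₁ := 0, a₂ := -1, a₃ := 1, a₄ := -2, a₆ := 1 }
    W.Δ ≠ 0 ∧ Nonempty (W.toAffine.Point ≃+ (ZMod 3) × (ZMod 3)) := by
  have hφ := ZMod.liftPair_surjective (three_zsmul_eq_zero_of_add_self_eq_neg P_add_P)
    (three_zsmul_eq_zero_of_add_self_eq_neg Q_add_Q) closure_P_Q_eq_top
  refine ⟨Δ_ne_zero, ⟨(AddEquiv.ofBijective _ (hφ.bijective_of_nat_card_le ?_)).symm⟩⟩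
  rw [natCard_point, Nat.card_prod, Nat.card_zmod]
end

section
/- Let E be the elliptic curve over the finite field 𝔽₁₃ given by the Weierstrass equation y² + y = x³ + x² − 4x + 2 (i.e., with coefficients a₁ = 0, a₂ = 1, a₃ = 1, a₄ = −4, a₆ = 2; this equation has nonzero discriminant over 𝔽₁₃). Then E(𝔽₁₃) contains no point of order 3; equivalently, the 3-torsion subgroup of E(𝔽₁₃) is trivial. -/
/-!
If `P = (x, y) ≠ 0` and `3 • P = 0`, then `P + P = -P`, so the tangent at `P` is not vertical and
`x(2P) = x(P)`. The duplication formula gives `(x(2P) - x(P)) ψ₂(P)² = -Ψ₃(x)`, so `x` is a root of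
the `3`-division polynomial, here `Ψ₃ = 3x⁴ + 4x³ - 24x² + 27x - 7`. Its roots in `𝔽₁₃` are
`4, 6, 9, 10`, and none of them is the `x`-coordinate of an `𝔽₁₃`-point of the curve.
-/

open Polynomial

namespace WeierstrassCurve

variable {F : Type*} [Field F]

lemma eval_Ψ₃ (W : WeierstrassCurve F) (x : F) :
    W.Ψ₃.eval x = 3 * x ^ 4 + W.b₂ * x ^ 3 + 3 * W.b₄ * x ^ 2 + 3 * W.b₆ * x + W.b₈ := by
  simp [Ψ₃]

namespace Affine

variable [DecidableEq F] {W : Affine F}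

lemma addX_slope_self_sub_mul_sq {x y : F} (h : W.Equation x y) (hy : y ≠ W.negY x y) :
    (W.addX x x (W.slope x x y y) - x) * (y - W.negY x y) ^ 2 = -W.Ψ₃.eval x := by
  have hD : y - W.negY x y ≠ 0 := sub_ne_zero.mpr hy
  rw [equation_iff] at h
  rw [slope_of_Y_ne rfl hy, eval_Ψ₃, addX]
  field_simp
  simp only [negY, b₂, b₄, b₆, b₈]
  linear_combination -(12 * x + W.a₁ ^ 2 + 4 * W.a₂) * h

lemma Point.eval_Ψ₃_eq_zero_of_three_nsmul_eq_zero {x y : F} {h : W.Nonsingular x y}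
    (h3 : 3 • Point.some x y h = 0) : W.Ψ₃.eval x = 0 := by
  have h2 : Point.some x y h + Point.some x y h = -Point.some x y h := by
    rw [← two_nsmul]
    exact eq_neg_of_add_eq_zero_left (by rwa [← succ_nsmul])
  by_cases hy : y = W.negY x y
  · rw [Point.add_self_of_Y_eq hy, eq_comm, neg_eq_zero] at h2
    exact absurd h2 (Point.some_ne_zero h)
  · rw [Point.add_self_of_Y_ne hy, Point.neg_some, Point.some.injEq] at h2
    have hdup := addX_slope_self_sub_mul_sq h.1 hy
    rwa [h2.1, sub_self, zero_mul, eq_comm, neg_eq_zero] at hdup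

end Affine

end WeierstrassCurve

lemma curve571B1_mod13_Ψ₃_ne_zero : ∀ x y : ZMod 13, y ^ 2 + y = x ^ 3 + x ^ 2 - 4 * x + 2 →
    3 * x ^ 4 + 4 * x ^ 3 - 24 * x ^ 2 + 27 * x - 7 ≠ 0 := by
  decide

open WeierstrassCurve Affine

/-- The elliptic curve `y² + y = x³ + x² - 4x + 2` over `𝔽₁₃` (the reduction modulo `13` of the
elliptic curve `571B1` over `ℚ`) has nonzero discriminant, and its group of `𝔽₁₃`-rational
points contains no point of order `3`: the `3`-torsion subgroup of `E(𝔽₁₃)` is trivial. -/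
theorem ogg_stmt2 [Fact (Nat.Prime 13)] :
    letI W : WeierstrassCurve (ZMod 13) :=
      { a₁ := 0, a₂ := 1, a₃ := 1, a₄ := -4, a₆ := 2 }
    W.Δ ≠ 0 ∧ ∀ P : W.toAffine.Point, 3 • P = 0 → P = 0 := by
  refine ⟨by decide +revert, ?_⟩
  rintro (_ | ⟨x, y, h⟩) h3
  · rfl
  · have hΨ := Point.eval_Ψ₃_eq_zero_of_three_nsmul_eq_zero h3
    have hE := (equation_iff x y).1 h.1
    rw [eval_Ψ₃] at hΨ
    norm_num [b₂, b₄, b₆, b₈] at hΨ hE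
    exact (curve571B1_mod13_Ψ₃_ne_zero x y (by linear_combination hE)
      (by linear_combination hΨ)).elim
end

section
/- Let S₂, S₃, S₅, S₁₁ ∈ M₅(ℤ) be the four explicit integer matrices given in the context, and let R ⊆ M₅(ℤ) be the subring (with identity) generated by them. Then: (a) R equals the ℤ-linear span of the five matrices {1, S₂, S₃, S₅, S₁₁}, which are ℤ-linearly independent, so R is a free ℤ-module of rank 5; and (b) the additive map R → ℤ⁵ sending a matrix M to its first row e₁·M is bijective. Consequently, the module of integer row vectors ℤ^{1×5}, with R acting by right multiplication, is a free R-module of rank one generated by e₁ = (1,0,0,0,0). -/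
open Matrix

/-- The matrix by which the Hecke operator `T₂` acts on the character group `M₅` of `J₀(65)`. -/
def OggS2 : Matrix (Fin 5) (Fin 5) ℤ :=
  !![-1, -1, 1, 0, 0;
     -1, -1, 0, 1, 0;
      2, -1, 0, 0, -1;
     -1,  2, 0, 0, -1;
      0,  0, 0, 0, -1]

/-- The matrix by which the Hecke operator `T₃` acts on the character group `M₅` of `J₀(65)`. -/
def OggS3 : Matrix (Fin 5) (Fin 5) ℤ :=
  !![ 0, -1, 0, 1, -1;
     -1,  0, 1, 0, -1;
     -1,  2, 1, 0, -2;
      2, -1, 0, 1, -2;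
      0,  0, 0, 0, -2]

/-- The matrix by which the Hecke operator `T₅` acts on the character group `M₅` of `J₀(65)`. -/
def OggS5 : Matrix (Fin 5) (Fin 5) ℤ :=
  !![0, 1, 0, 0, -1;
     1, 0, 0, 0, -1;
     0, 0, 0, 1, -1;
     0, 0, 1, 0, -1;
     0, 0, 0, 0, -1]

/-- The matrix by which the Hecke operator `T₁₁` acts on the character group `M₅` of `J₀(65)`. -/
def OggS11 : Matrix (Fin 5) (Fin 5) ℤ :=
  !![ 0,  3,  0, -1, 0;
      3,  0, -1,  0, 0;
      1, -2, -1,  2, 1;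
     -2,  1,  2, -1, 1;
      0,  0,  0,  0, 2]

/-- The subring of `M₅(ℤ)` generated by `S₂, S₃, S₅, S₁₁` (a concrete model of the Hecke
algebra `𝐓` of level `65`). -/
noncomputable def OggHeckeAlgebra : Subring (Matrix (Fin 5) (Fin 5) ℤ) :=
  Subring.closure {OggS2, OggS3, OggS5, OggS11}

/-!
The first rows of `1, S₂, S₃, S₅, S₁₁` form a unimodular integer matrix `P`. So on the `ℤ`-span of
these five matrices `Bⱼ`, a matrix is recovered from its first row `v` as `∑ⱼ (v P⁻¹)ⱼ Bⱼ`. This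
makes the `Bⱼ` linearly independent and the first-row map bijective on their span, and it reduces
the closure of the span under multiplication, hence its equality with the subring generated by the
`Sₚ`, to checking the 25 products `Bᵢ Bⱼ` against that formula.
-/

open Submodule

theorem Subring.coe_closure_eq_span_int {A : Type*} [Ring A] {s : Set A} (h1 : 1 ∈ s)
    (hmul : ∀ x ∈ s, ∀ y ∈ s, x * y ∈ span ℤ s) :
    (Subring.closure s : Set A) = span ℤ s := by
  have hspan_mul : span ℤ s * span ℤ s ≤ span ℤ s := by
    rw [span_mul_span, span_le]
    rintro _ ⟨x, hx, y, hy, rfl⟩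
    exact hmul x hx y hy
  let T : Subring A := ((span ℤ s).toSubalgebra (subset_span h1)
    fun _ _ hx hy => hspan_mul (mul_mem_mul hx hy)).toSubring
  exact subset_antisymm (Subring.closure_le (t := T) |>.mpr subset_span)
    (span_le (p := (Subring.closure s).toAddSubgroup.toIntSubmodule) |>.mpr Subring.subset_closure)

section Coordinates

variable {ι R M : Type*} [Fintype ι] [CommRing R] [AddCommGroup M] [Module R M]

def coordMatrix (ρ : M →ₗ[R] ι → R) (B : ι → M) : Matrix ι ι R :=
  Matrix.of fun j => ρ (B j)

def coordSection (B : ι → M) (Q : Matrix ι ι R) : (ι → R) →ₗ[R] M :=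
  Fintype.linearCombination R B ∘ₗ Q.vecMulLinear

theorem comp_fintypeLinearCombination (ρ : M →ₗ[R] ι → R) (B : ι → M) :
    ρ ∘ₗ Fintype.linearCombination R B = (coordMatrix ρ B).vecMulLinear := by
  refine LinearMap.ext fun a => ?_
  simp only [LinearMap.comp_apply, Fintype.linearCombination_apply, map_sum, map_smul,
    vecMulLinear_apply, vecMul_eq_sum, coordMatrix]
  rfl

variable [DecidableEq ι] {ρ : M →ₗ[R] ι → R} {B : ι → M} {Q : Matrix ι ι R}

theorem leftInverse_coordSection (hQ : Q * coordMatrix ρ B = 1) :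
    Function.LeftInverse ρ (coordSection B Q) := fun v => by
  change (ρ ∘ₗ Fintype.linearCombination R B) (v ᵥ* Q) = v
  rw [comp_fintypeLinearCombination, vecMulLinear_apply, vecMul_vecMul, hQ, vecMul_one]

theorem range_coordSection (hQ : Q * coordMatrix ρ B = 1) :
    LinearMap.range (coordSection B Q) = span R (Set.range B) := by
  have hsurj : Function.Surjective Q.vecMulLinear := fun v => ⟨v ᵥ* coordMatrix ρ B, by
    rw [vecMulLinear_apply, vecMul_vecMul, mul_eq_one_comm.mp hQ, vecMul_one]⟩
  rw [coordSection, LinearMap.range_comp_of_range_eq_top _ (LinearMap.range_eq_top.mpr hsurj),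
    Fintype.range_linearCombination]

theorem linearIndependent_of_mul_coordMatrix_eq_one (hQ : Q * coordMatrix ρ B = 1) :
    LinearIndependent R B :=
  LinearIndependent.of_comp ρ <|
    (coordMatrix ρ B).linearIndependent_rows_of_isUnit (IsUnit.of_mul_eq_one_right Q hQ)

theorem mem_span_iff_coordSection_apply_eq (hQ : Q * coordMatrix ρ B = 1) {x : M} :
    x ∈ span R (Set.range B) ↔ coordSection B Q (ρ x) = x := by
  rw [← range_coordSection hQ]
  refine ⟨?_, fun h => ⟨ρ x, h⟩⟩
  rintro ⟨v, rfl⟩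
  rw [leftInverse_coordSection hQ v]

theorem bijective_restrict_span_of_mul_coordMatrix_eq_one (hQ : Q * coordMatrix ρ B = 1) :
    Function.Bijective fun x : span R (Set.range B) => ρ x := by
  rw [← range_coordSection hQ]
  exact (LinearEquiv.ofLeftInverse (leftInverse_coordSection hQ)).symm.bijective

end Coordinates

def oggBasis : Fin 5 → Matrix (Fin 5) (Fin 5) ℤ := ![1, OggS2, OggS3, OggS5, OggS11]

def firstRow : Matrix (Fin 5) (Fin 5) ℤ →ₗ[ℤ] Fin 5 → ℤ := LinearMap.proj 0

def oggFirstRowsInv : Matrix (Fin 5) (Fin 5) ℤ :=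
  !![1, 0, 0,  0, 0;
     0, 0, 1, -1, 1;
     1, 1, 1, -1, 1;
     0, 0, 3, -3, 2;
     0, 0, 1, -2, 1]

theorem oggFirstRowsInv_mul : oggFirstRowsInv * coordMatrix firstRow oggBasis = 1 := by
  decide

theorem range_oggBasis : Set.range oggBasis = {1, OggS2, OggS3, OggS5, OggS11} := by
  simp only [oggBasis, range_cons, range_empty, Set.union_empty, Set.singleton_union]

theorem oggBasis_mul_mem_span (i j : Fin 5) :
    oggBasis i * oggBasis j ∈ span ℤ (Set.range oggBasis) := by
  rw [mem_span_iff_coordSection_apply_eq oggFirstRowsInv_mul]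
  revert i j
  decide

theorem coe_oggHeckeAlgebra : (OggHeckeAlgebra : Set (Matrix (Fin 5) (Fin 5) ℤ)) =
    span ℤ (Set.range oggBasis) := by
  rw [OggHeckeAlgebra, ← Subring.closure_insert_one, ← range_oggBasis]
  refine Subring.coe_closure_eq_span_int ⟨0, rfl⟩ ?_
  simpa only [Set.forall_mem_range] using oggBasis_mul_mem_span

/-- (a) The subring `R` of `M₅(ℤ)` generated by the four Hecke matrices
`S₂, S₃, S₅, S₁₁` coincides with the `ℤ`-linear span of `1, S₂, S₃, S₅, S₁₁`, and these five
matrices are `ℤ`-linearly independent; so `R` is a free `ℤ`-module of rank `5`.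
(b) The additive map `R → ℤ⁵` sending a matrix `M ∈ R` to its first row `e₁ ⬝ M` is bijective.
(Hence the row module `ℤ^{1×5}` is a free `R`-module of rank one generated by
`e₁ = (1,0,0,0,0)`: this is the concrete content of the isomorphism `M₅ ≅ 𝐓` of
Proposition 3.2.) -/
theorem ogg_stmt4 :
    ((OggHeckeAlgebra : Set (Matrix (Fin 5) (Fin 5) ℤ)) =
        (Submodule.span ℤ {1, OggS2, OggS3, OggS5, OggS11} :
          Submodule ℤ (Matrix (Fin 5) (Fin 5) ℤ)) ∧
      LinearIndependent ℤ ![(1 : Matrix (Fin 5) (Fin 5) ℤ), OggS2, OggS3, OggS5, OggS11]) ∧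
    Function.Bijective
      (fun M : OggHeckeAlgebra => ((M : Matrix (Fin 5) (Fin 5) ℤ) 0 : Fin 5 → ℤ)) :=
  ⟨⟨range_oggBasis ▸ coe_oggHeckeAlgebra,
      linearIndependent_of_mul_coordMatrix_eq_one oggFirstRowsInv_mul⟩,
    (bijective_restrict_span_of_mul_coordMatrix_eq_one oggFirstRowsInv_mul).comp
      (Equiv.setCongr coe_oggHeckeAlgebra).bijective⟩
end

section
/- Let S₂, S₃, S₅, S₁₁ ∈ M₅(ℤ) be the four explicit integer matrices given in the context, and let R ⊆ M₅(ℤ) be the subring (with identity) generated by them. Then there is no column vector w ∈ ℤ⁵ such that {M·w : M ∈ R} = ℤ⁵. In other words, the module of integer column vectors ℤ⁵, with R acting by left multiplication, is not a cyclic R-module; in particular it is not isomorphic to R, i.e., it is not a free R-module of rank one. -/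
open Matrix

/-!
Reduce modulo 2. The row vectors `u₁ = (0,0,0,0,1)` and `u₂ = (1,1,1,1,0)` are left eigenvectors
of each generator with a common eigenvalue (`1, 0, 1, 0` for `S₂, S₃, S₅, S₁₁`), hence of every
element `M` of the reduced Hecke algebra, with some common eigenvalue `c`. Thus
`(u₁ ⬝ Mw, u₂ ⬝ Mw) = c • (u₁ ⬝ w, u₂ ⬝ w)`, and the vectors `Mw` cannot reduce to vectors on
which `(u₁, u₂)` takes both values `(1, 0)` and `(0, 1)`, although reduction `ℤ⁵ → (ℤ/2)⁵` is
onto. Equivalently, `ℤ⁵/𝔪ℤ⁵` has dimension at least 2 for `𝔪 = (2, T₂ - 1, T₃, T₅ - 1, T₁₁)`.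
-/

namespace Matrix

def IsCyclicVector {n K : Type*} [Fintype n] [Semiring K] (S : Set (Matrix n n K))
    (w : n → K) : Prop :=
  ∀ v : n → K, ∃ M ∈ S, M *ᵥ w = v

variable {n K : Type*} [Fintype n] [DecidableEq n]

theorem IsCyclicVector.map {A B : Type*} [CommRing A] [CommRing B] {S : Subring (Matrix n n A)}
    {w : n → A} (hw : IsCyclicVector S w) (f : A →+* B) (hf : Function.Surjective f) :
    IsCyclicVector (S.map f.mapMatrix) (f ∘ w) := by
  intro v
  obtain ⟨v', rfl⟩ := hf.comp_left v
  obtain ⟨M, hM, rfl⟩ := hw v'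
  exact ⟨f.mapMatrix M, Subring.mem_map.2 ⟨M, hM, rfl⟩,
    funext fun i => (RingHom.map_mulVec f M w i).symm⟩

section SharedLeftEigen

variable [CommRing K]

def sharedLeftEigenSubring (u₁ u₂ : n → K) : Subring (Matrix n n K) where
  carrier := {M | ∃ c : K, u₁ ᵥ* M = c • u₁ ∧ u₂ ᵥ* M = c • u₂}
  zero_mem' := ⟨0, by simp, by simp⟩
  one_mem' := ⟨1, by simp, by simp⟩
  add_mem' := by
    rintro M N ⟨c, hM₁, hM₂⟩ ⟨d, hN₁, hN₂⟩
    exact ⟨c + d, by rw [vecMul_add, hM₁, hN₁, add_smul], by rw [vecMul_add, hM₂, hN₂, add_smul]⟩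
  neg_mem' := by
    rintro M ⟨c, h₁, h₂⟩
    exact ⟨-c, by rw [vecMul_neg, h₁, neg_smul], by rw [vecMul_neg, h₂, neg_smul]⟩
  mul_mem' := by
    rintro M N ⟨c, hM₁, hM₂⟩ ⟨d, hN₁, hN₂⟩
    refine ⟨c * d, ?_, ?_⟩
    · rw [← vecMul_vecMul, hM₁, smul_vecMul, hN₁, smul_smul]
    · rw [← vecMul_vecMul, hM₂, smul_vecMul, hN₂, smul_smul]

theorem exists_dotProduct_mulVec_eq_of_mem_sharedLeftEigenSubring {u₁ u₂ : n → K}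
    {M : Matrix n n K} (hM : M ∈ sharedLeftEigenSubring u₁ u₂) (w : n → K) :
    ∃ c : K, u₁ ⬝ᵥ (M *ᵥ w) = c * (u₁ ⬝ᵥ w) ∧ u₂ ⬝ᵥ (M *ᵥ w) = c * (u₂ ⬝ᵥ w) := by
  obtain ⟨c, h₁, h₂⟩ := hM
  exact ⟨c, by rw [dotProduct_mulVec, h₁, smul_dotProduct, smul_eq_mul],
    by rw [dotProduct_mulVec, h₂, smul_dotProduct, smul_eq_mul]⟩

theorem not_isCyclicVector_of_le_sharedLeftEigenSubring [Nontrivial K] {u₁ u₂ : n → K}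
    {S : Subring (Matrix n n K)} (hS : S ≤ sharedLeftEigenSubring u₁ u₂) {v₁ v₂ : n → K}
    (h₁₁ : u₁ ⬝ᵥ v₁ = 1) (h₂₁ : u₂ ⬝ᵥ v₁ = 0) (h₂₂ : u₂ ⬝ᵥ v₂ = 1) (w : n → K) :
    ¬ IsCyclicVector S w := by
  intro hw
  obtain ⟨M, hM, rfl⟩ := hw v₁
  obtain ⟨N, hN, rfl⟩ := hw v₂
  obtain ⟨c, hc₁, hc₂⟩ := exists_dotProduct_mulVec_eq_of_mem_sharedLeftEigenSubring (hS hM) w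
  obtain ⟨d, -, hd₂⟩ := exists_dotProduct_mulVec_eq_of_mem_sharedLeftEigenSubring (hS hN) w
  have hc : IsUnit c := IsUnit.of_mul_eq_one _ (hc₁ ▸ h₁₁)
  have hu₂w : u₂ ⬝ᵥ w = 0 := (hc.mul_right_eq_zero).1 (hc₂ ▸ h₂₁)
  exact one_ne_zero (by rw [← h₂₂, hd₂, hu₂w, mul_zero])

end SharedLeftEigen

end Matrix

theorem oggHeckeAlgebra_map_le_sharedLeftEigenSubring :
    Subring.map (Int.castRingHom (ZMod 2)).mapMatrix OggHeckeAlgebra ≤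
      sharedLeftEigenSubring ![0, 0, 0, 0, 1] ![1, 1, 1, 1, 0] := by
  rw [Subring.map_le_iff_le_comap, OggHeckeAlgebra, Subring.closure_le]
  rintro M (rfl | rfl | rfl | rfl)
  · exact ⟨1, by decide, by decide⟩
  · exact ⟨0, by decide, by decide⟩
  · exact ⟨1, by decide, by decide⟩
  · exact ⟨0, by decide, by decide⟩

/-- There is no column vector `w ∈ ℤ⁵` such that `{M ⬝ w : M ∈ R} = ℤ⁵`, where `R` is the
subring of `M₅(ℤ)` generated by the four Hecke matrices `S₂, S₃, S₅, S₁₁`: the module of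
integer column vectors with `R` acting by left multiplication is not a cyclic `R`-module, so in
particular it is not a free `R`-module of rank one.  (This is the concrete content of the
remark that the `ℤ`-dual `M₅*` of the character group of `J₀(65)` at `5` is not free over the
Hecke algebra of level `65`.) -/
theorem ogg_stmt5 :
    ¬ ∃ w : Fin 5 → ℤ,
      {v : Fin 5 → ℤ | ∃ M ∈ OggHeckeAlgebra, M.mulVec w = v} = Set.univ := by
  rintro ⟨w, hw⟩
  have hcyclic : IsCyclicVector (OggHeckeAlgebra : Set (Matrix (Fin 5) (Fin 5) ℤ)) w :=
    Set.eq_univ_iff_forall.1 hw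
  exact not_isCyclicVector_of_le_sharedLeftEigenSubring
    oggHeckeAlgebra_map_le_sharedLeftEigenSubring (v₁ := ![0, 0, 0, 0, 1])
    (v₂ := ![1, 0, 0, 0, 0]) (by decide) (by decide) (by decide) _
    (hcyclic.map (Int.castRingHom (ZMod 2)) ZMod.intCast_surjective)
end
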